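/- arXiv:1702.06421 — 3 statements merged into one kernel-verified Lean document; each statement's English description precedes it below -/
import Mathlib

section
/- For u > 0 sufficiently small, k > 0, ν > -k (so the integrals converge), and c ∈ ℝ, the Sumudu transform of the k-Struve function satisfies ∫_0^∞ e^{-t} S^k_{ν,c}(ut) dt = ∑_{r=0}^∞ (-c)^r Γ(ν/k + 2r + 2) / (k^{r + ν/k + 1/2} Γ(r + ν/k + 3/2) Γ(r + 3/2)) · (u/2)^{ν/k + 1 + 2r}, provided the series on the right converges absolutely and term-by-term integration is valid (e.g., |c| u² < 4k). -/
/-- The k-gamma function (closed form): `Γ_k(γ) = k^(γ/k - 1) Γ(γ/k)`. -/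
noncomputable def kGamma (k γ : ℝ) : ℝ := k ^ (γ / k - 1) * Real.Gamma (γ / k)

/-- The k-Struve function `S^k_{ν,c}`. -/
noncomputable def kStruve (k ν c x : ℝ) : ℝ :=
  ∑' r : ℕ, (-c) ^ r / (kGamma k (r * k + ν + 3 * k / 2) * Real.Gamma ((r : ℝ) + 3 / 2)) *
    (x / 2) ^ (2 * (r : ℝ) + ν / k + 1)

open MeasureTheory Set in
/-- The Sumudu transform of the k-Struve function: for `u > 0` small enough
(`|c| u² < 4k`), `∫_0^∞ e^{-t} S^k_{ν,c}(ut) dt` equals the stated series. -/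
theorem sumudu_kStruve (k ν c u : ℝ) (hk : 0 < k) (hν : -k < ν) (hu : 0 < u)
    (hcu : |c| * u ^ 2 < 4 * k)
    (habs : Summable fun r : ℕ =>
      |(-c) ^ r * Real.Gamma (ν / k + 2 * (r : ℝ) + 2) /
        (k ^ ((r : ℝ) + ν / k + 1 / 2) * Real.Gamma ((r : ℝ) + ν / k + 3 / 2) *
          Real.Gamma ((r : ℝ) + 3 / 2)) * (u / 2) ^ (ν / k + 1 + 2 * (r : ℝ))|) :
    (∫ t in Set.Ioi (0 : ℝ), Real.exp (-t) * kStruve k ν c (u * t)) =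
      ∑' r : ℕ, (-c) ^ r * Real.Gamma (ν / k + 2 * (r : ℝ) + 2) /
        (k ^ ((r : ℝ) + ν / k + 1 / 2) * Real.Gamma ((r : ℝ) + ν / k + 3 / 2) *
          Real.Gamma ((r : ℝ) + 3 / 2)) * (u / 2) ^ (ν / k + 1 + 2 * (r : ℝ)) := by
  have hk0 : k ≠ 0 := hk.ne'
  have hνk : -1 < ν / k := (lt_div_iff₀ hk).mpr (by linarith)
  -- notation
  set a : ℕ → ℝ := fun r =>
    (-c) ^ r / (kGamma k ((r : ℝ) * k + ν + 3 * k / 2) * Real.Gamma ((r : ℝ) + 3 / 2)) with ha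
  set p : ℕ → ℝ := fun r => 2 * (r : ℝ) + ν / k + 1 with hpdef
  have hp : ∀ r : ℕ, 0 < p r := by
    intro r
    have : (0 : ℝ) ≤ (r : ℝ) := Nat.cast_nonneg r
    simp only [hpdef]
    nlinarith
  set term : ℕ → ℝ := fun r =>
      (-c) ^ r * Real.Gamma (ν / k + 2 * (r : ℝ) + 2) /
        (k ^ ((r : ℝ) + ν / k + 1 / 2) * Real.Gamma ((r : ℝ) + ν / k + 3 / 2) *
          Real.Gamma ((r : ℝ) + 3 / 2)) * (u / 2) ^ (ν / k + 1 + 2 * (r : ℝ)) with hterm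
  set F : ℕ → ℝ → ℝ := fun r t => Real.exp (-t) * (a r * (u * t / 2) ^ p r) with hF
  -- the key Gamma integral
  have key : ∀ q : ℝ, 0 < q →
      (∫ t in Ioi (0 : ℝ), Real.exp (-t) * (u * t / 2) ^ q)
        = (u / 2) ^ q * Real.Gamma (q + 1) := by
    intro q hq
    have h1 : ∀ t ∈ Ioi (0 : ℝ), Real.exp (-t) * (u * t / 2) ^ q
        = (u / 2) ^ q * (Real.exp (-t) * t ^ (q + 1 - 1)) := by
      intro t ht
      have h2 : u * t / 2 = u / 2 * t := by ring
      rw [h2, Real.mul_rpow (by positivity) (le_of_lt ht), add_sub_cancel_right]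
      ring
    rw [setIntegral_congr_fun measurableSet_Ioi h1, integral_const_mul,
      ← Real.Gamma_eq_integral (by linarith : (0 : ℝ) < q + 1)]
  -- the k-Gamma rewriting
  have hkG : ∀ r : ℕ, kGamma k ((r : ℝ) * k + ν + 3 * k / 2)
      = k ^ ((r : ℝ) + ν / k + 1 / 2) * Real.Gamma ((r : ℝ) + ν / k + 3 / 2) := by
    intro r
    have h : ((r : ℝ) * k + ν + 3 * k / 2) / k = (r : ℝ) + ν / k + 3 / 2 := by
      rw [div_eq_iff hk0, add_mul, add_mul, div_mul_cancel₀ ν hk0]; ring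
    rw [kGamma, h, show ((r : ℝ) + ν / k + 3 / 2) - 1 = (r : ℝ) + ν / k + 1 / 2 by ring]
  -- the coefficient identity
  have coef : ∀ r : ℕ, a r * ((u / 2) ^ p r * Real.Gamma (p r + 1)) = term r := by
    intro r
    have h1 : p r + 1 = ν / k + 2 * (r : ℝ) + 2 := by simp only [hpdef]; ring
    have h2 : p r = ν / k + 1 + 2 * (r : ℝ) := by simp only [hpdef]; ring
    simp only [ha, hterm, hkG r, h1, h2]
    ring
  -- positivity of the pure factor
  have hpos : ∀ r : ℕ, ∀ t ∈ Ioi (0 : ℝ), 0 ≤ Real.exp (-t) * (u * t / 2) ^ p r := by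
    intro r t ht
    have ht' : (0 : ℝ) < t := ht
    positivity
  -- integrability of each term
  have hFint : ∀ r : ℕ, IntegrableOn (F r) (Ioi (0 : ℝ)) := by
    intro r
    have h : IntegrableOn
        (fun t : ℝ => a r * (u / 2) ^ p r * (Real.exp (-t) * t ^ (p r + 1 - 1)))
        (Ioi (0 : ℝ)) :=
      (Real.GammaIntegral_convergent
        (by linarith [hp r] : (0 : ℝ) < p r + 1)).const_mul (a r * (u / 2) ^ p r)
    refine h.congr_fun (fun t ht => ?_) measurableSet_Ioi
    have h2 : u * t / 2 = u / 2 * t := by ring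
    simp only [hF]
    rw [h2, Real.mul_rpow (by positivity) (le_of_lt ht.out), add_sub_cancel_right]
    ring
  -- the norm integrals equal |term r|
  have hnorm : ∀ r : ℕ, (∫ t in Ioi (0 : ℝ), ‖F r t‖) = |term r| := by
    intro r
    have h1 : ∀ t ∈ Ioi (0 : ℝ), ‖F r t‖ = |a r| * (Real.exp (-t) * (u * t / 2) ^ p r) := by
      intro t ht
      have h2 : F r t = a r * (Real.exp (-t) * (u * t / 2) ^ p r) := by
        simp only [hF]; ring
      rw [Real.norm_eq_abs, h2, abs_mul, abs_of_nonneg (hpos r t ht)]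
    have hGa : (0 : ℝ) ≤ (u / 2) ^ p r * Real.Gamma (p r + 1) :=
      mul_nonneg (Real.rpow_nonneg (by positivity) _)
        (Real.Gamma_pos_of_pos (by linarith [hp r])).le
    rw [setIntegral_congr_fun measurableSet_Ioi h1, integral_const_mul, key _ (hp r),
      ← coef r, abs_mul, abs_of_nonneg hGa]
  have hsum : Summable fun r : ℕ => ∫ t in Ioi (0 : ℝ), ‖F r t‖ :=
    habs.congr fun r => (hnorm r).symm
  -- main computation
  have hmain : ∀ t ∈ Ioi (0 : ℝ), Real.exp (-t) * kStruve k ν c (u * t) = ∑' r : ℕ, F r t := by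
    intro t _
    rw [kStruve, tsum_mul_left]
  calc (∫ t in Ioi (0 : ℝ), Real.exp (-t) * kStruve k ν c (u * t))
      = ∫ t in Ioi (0 : ℝ), ∑' r : ℕ, F r t :=
        setIntegral_congr_fun measurableSet_Ioi hmain
    _ = ∑' r : ℕ, ∫ t in Ioi (0 : ℝ), F r t :=
        (integral_tsum_of_summable_integral_norm hFint hsum).symm
    _ = ∑' r : ℕ, term r := by
        refine tsum_congr fun r => ?_
        have h1 : ∀ t ∈ Ioi (0 : ℝ), F r t = a r * (Real.exp (-t) * (u * t / 2) ^ p r) := by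
          intro t _; simp only [hF]; ring
        rw [setIntegral_congr_fun measurableSet_Ioi h1, integral_const_mul, key _ (hp r),
          coef r]
end

section
/- For ν > 0, d > 0, and f locally integrable on [0,∞) of at most exponential growth, the Sumudu transform of the Riemann–Liouville fractional integral of order ν of f equals u^ν times the Sumudu transform of f: S[(₀D_t^{-ν} f)](u) = u^ν · S[f](u) for all u > 0 where both sides are defined. -/
open MeasureTheory

/-- The Riemann–Liouville fractional integral `(₀D_t^{-ν} f)(t)`. -/
noncomputable def rlInt (ν : ℝ) (f : ℝ → ℝ) (t : ℝ) : ℝ :=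
  (1 / Real.Gamma ν) * ∫ s in (0 : ℝ)..t, (t - s) ^ (ν - 1) * f s

/-!
The substitution `s = u σ` in the Riemann–Liouville integral gives
`(₀D^{-ν} f)(u t) = u^ν (₀D^{-ν} f(u ·))(t)`, so it suffices to treat `u = 1`. There Fubini,
applied to `e^{-t} (t - σ)^{ν-1} g(σ)` on `0 < σ < t`, turns the left-hand side into
`Γ(ν)⁻¹ ∫ g(σ) ∫_σ^∞ e^{-t} (t - σ)^{ν-1} dt dσ`, and the inner integral is `e^{-σ} Γ(ν)`.
The same computation with `|g|` gives the absolute integrability that Fubini needs.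
-/

open Set Real

lemma volume_restrict_Ioi_eq_map_add (σ : ℝ) :
    volume.restrict (Ioi σ) = (volume.restrict (Ioi 0)).map (· + σ) := by
  conv_lhs => rw [← map_add_right_eq_self volume σ]
  rw [(measurableEmbedding_addRight σ).restrict_map, preimage_add_const_Ioi, sub_self]

lemma integrableOn_exp_neg_mul_sub_rpow {ν : ℝ} (hν : 0 < ν) (σ : ℝ) :
    IntegrableOn (fun t => exp (-t) * (t - σ) ^ (ν - 1)) (Ioi σ) := by
  rw [IntegrableOn, volume_restrict_Ioi_eq_map_add,
    (measurableEmbedding_addRight σ).integrable_map_iff]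
  refine ((GammaIntegral_convergent hν).const_mul (exp (-σ))).congr (ae_of_all _ fun r => ?_)
  simp only [Function.comp_apply, add_sub_cancel_right, neg_add, exp_add]
  ring

lemma integral_exp_neg_mul_sub_rpow {ν : ℝ} (hν : 0 < ν) (σ : ℝ) :
    ∫ t in Ioi σ, exp (-t) * (t - σ) ^ (ν - 1) = exp (-σ) * Gamma ν := by
  rw [volume_restrict_Ioi_eq_map_add,
    (measurableEmbedding_addRight σ).integral_map, Gamma_eq_integral hν,
    ← integral_const_mul]
  congr 1 with r
  simp only [add_sub_cancel_right, neg_add, exp_add]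
  ring

lemma rlInt_comp_mul_left (ν : ℝ) (f : ℝ → ℝ) {u t : ℝ} (hu : 0 < u) (ht : 0 ≤ t) :
    rlInt ν f (u * t) = u ^ ν * rlInt ν (fun s => f (u * s)) t := by
  have hsubst : ∫ s in (0 : ℝ)..u * t, (u * t - s) ^ (ν - 1) * f s
      = u * ∫ s in (0 : ℝ)..t, (u * t - u * s) ^ (ν - 1) * f (u * s) := by
    rw [intervalIntegral.integral_comp_mul_left (fun s => (u * t - s) ^ (ν - 1) * f s) hu.ne',
      mul_zero, smul_eq_mul, mul_inv_cancel_left₀ hu.ne']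
  have hscale : ∫ s in (0 : ℝ)..t, (u * t - u * s) ^ (ν - 1) * f (u * s)
      = u ^ (ν - 1) * ∫ s in (0 : ℝ)..t, (t - s) ^ (ν - 1) * f (u * s) := by
    rw [← intervalIntegral.integral_const_mul]
    refine intervalIntegral.integral_congr fun s hs => ?_
    rw [uIcc_of_le ht] at hs
    simp only [← mul_sub, mul_rpow hu.le (sub_nonneg.mpr hs.2), mul_assoc]
  rw [rlInt, rlInt, hsubst, hscale, rpow_sub_one hu.ne']
  field_simp

noncomputable def expRLKernel (ν σ t : ℝ) : ℝ :=
  (Ioi σ).indicator (fun s => exp (-s) * (s - σ) ^ (ν - 1)) t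

lemma expRLKernel_eq_indicator_Iio (ν σ t : ℝ) :
    expRLKernel ν σ t = (Iio t).indicator (fun σ => exp (-t) * (t - σ) ^ (ν - 1)) σ := by
  simp only [expRLKernel, indicator_apply, mem_Ioi, mem_Iio]

lemma expRLKernel_nonneg (ν σ t : ℝ) : 0 ≤ expRLKernel ν σ t :=
  indicator_nonneg (fun _ hs => mul_nonneg (exp_pos _).le
    (rpow_nonneg (sub_nonneg.mpr hs.le) _)) t

lemma measurable_expRLKernel (ν : ℝ) : Measurable (Function.uncurry (expRLKernel ν)) :=
  Measurable.indicator
    ((measurable_snd.neg.exp).mul ((measurable_snd.sub measurable_fst).pow_const _))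
    (measurableSet_lt measurable_fst measurable_snd)

lemma setIntegral_Ioi_expRLKernel {ν : ℝ} (hν : 0 < ν) {σ : ℝ} (hσ : 0 ≤ σ) :
    ∫ t in Ioi 0, expRLKernel ν σ t = exp (-σ) * Gamma ν := by
  unfold expRLKernel
  rw [← integral_exp_neg_mul_sub_rpow hν σ, integral_indicator measurableSet_Ioi,
    Measure.restrict_restrict measurableSet_Ioi, inter_eq_left.mpr (Ioi_subset_Ioi hσ)]

lemma integrableOn_Ioi_expRLKernel {ν : ℝ} (hν : 0 < ν) {σ : ℝ} (hσ : 0 ≤ σ) :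
    IntegrableOn (expRLKernel ν σ) (Ioi 0) := by
  unfold expRLKernel
  rw [IntegrableOn, integrable_indicator_iff measurableSet_Ioi, IntegrableOn,
    Measure.restrict_restrict measurableSet_Ioi, inter_eq_left.mpr (Ioi_subset_Ioi hσ)]
  exact integrableOn_exp_neg_mul_sub_rpow hν σ

lemma setIntegral_Ioi_expRLKernel_mul (ν : ℝ) (g : ℝ → ℝ) {t : ℝ} (ht : 0 ≤ t) :
    ∫ σ in Ioi 0, expRLKernel ν σ t * g σ
      = exp (-t) * ∫ σ in (0 : ℝ)..t, (t - σ) ^ (ν - 1) * g σ := by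
  simp_rw [expRLKernel_eq_indicator_Iio, ← indicator_mul_left _ _ g]
  rw [integral_indicator measurableSet_Iio, Measure.restrict_restrict measurableSet_Iio,
    Iio_inter_Ioi, intervalIntegral.integral_of_le ht, integral_Ioc_eq_integral_Ioo,
    ← integral_const_mul]
  simp only [mul_assoc]

lemma integrable_expRLKernel_mul {ν : ℝ} (hν : 0 < ν) {g : ℝ → ℝ}
    (hg : IntegrableOn (fun t => exp (-t) * g t) (Ioi 0)) :
    Integrable (Function.uncurry fun σ t => expRLKernel ν σ t * g σ)
      ((volume.restrict (Ioi 0)).prod (volume.restrict (Ioi 0))) := by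
  have hg_meas : AEStronglyMeasurable g (volume.restrict (Ioi 0)) := by
    have h := (continuous_exp.aestronglyMeasurable (μ := volume.restrict (Ioi 0))).mul
      hg.aestronglyMeasurable
    refine h.congr (ae_of_all _ fun t => ?_)
    simp only [Pi.mul_apply, ← mul_assoc, ← exp_add, add_neg_cancel, exp_zero, one_mul]
  have hmeas : AEStronglyMeasurable (Function.uncurry fun σ t => expRLKernel ν σ t * g σ)
      ((volume.restrict (Ioi 0)).prod (volume.restrict (Ioi 0))) :=
    (measurable_expRLKernel ν).aestronglyMeasurable.mul
      (hg_meas.comp_quasiMeasurePreserving Measure.quasiMeasurePreserving_fst)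
  refine (integrable_prod_iff hmeas).mpr ⟨?_, ?_⟩
  · filter_upwards [ae_restrict_mem measurableSet_Ioi] with σ hσ
    simp only [Function.uncurry_apply_pair]
    exact (integrableOn_Ioi_expRLKernel hν hσ.le).mul_const _
  · refine ((hg.norm.const_mul (Gamma ν)).congr ?_)
    filter_upwards [ae_restrict_mem measurableSet_Ioi] with σ hσ
    simp only [Function.uncurry_apply_pair, norm_mul, norm_of_nonneg (expRLKernel_nonneg ν σ _),
      integral_mul_const, setIntegral_Ioi_expRLKernel hν hσ.le, norm_of_nonneg (exp_pos _).le]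
    ring

theorem setIntegral_Ioi_exp_neg_mul_rlInt {ν : ℝ} (hν : 0 < ν) {g : ℝ → ℝ}
    (hg : IntegrableOn (fun t => exp (-t) * g t) (Ioi 0)) :
    ∫ t in Ioi 0, exp (-t) * rlInt ν g t = ∫ t in Ioi 0, exp (-t) * g t := by
  have hΓ : Gamma ν ≠ 0 := (Gamma_pos_of_pos hν).ne'
  have hinner : EqOn (fun t => exp (-t) * rlInt ν g t)
      (fun t => (Gamma ν)⁻¹ * ∫ σ in Ioi 0, expRLKernel ν σ t * g σ) (Ioi 0) := fun t ht => by
    simp only [setIntegral_Ioi_expRLKernel_mul ν g ht.le, rlInt]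
    ring
  calc ∫ t in Ioi 0, exp (-t) * rlInt ν g t
      = (Gamma ν)⁻¹ * ∫ t in Ioi 0, ∫ σ in Ioi 0, expRLKernel ν σ t * g σ := by
        rw [setIntegral_congr_fun measurableSet_Ioi hinner, integral_const_mul]
    _ = (Gamma ν)⁻¹ * ∫ σ in Ioi 0, ∫ t in Ioi 0, expRLKernel ν σ t * g σ := by
        rw [integral_integral_swap (integrable_expRLKernel_mul hν hg)]
    _ = (Gamma ν)⁻¹ * ∫ σ in Ioi 0, Gamma ν * (exp (-σ) * g σ) := by
        congr 1
        refine setIntegral_congr_fun measurableSet_Ioi fun σ hσ => ?_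
        simp only [integral_mul_const, setIntegral_Ioi_expRLKernel hν hσ.le]
        ring
    _ = ∫ t in Ioi 0, exp (-t) * g t := by
        rw [integral_const_mul, inv_mul_cancel_left₀ hΓ]

theorem sumudu_rlInt_general (ν : ℝ) (hν : 0 < ν) (f : ℝ → ℝ)
    (u : ℝ) (hu : 0 < u)
    (h2 : IntegrableOn (fun t => Real.exp (-t) * f (u * t)) (Set.Ioi 0)) :
    (∫ t in Set.Ioi (0 : ℝ), Real.exp (-t) * rlInt ν f (u * t)) =
      u ^ ν * ∫ t in Set.Ioi (0 : ℝ), Real.exp (-t) * f (u * t) := by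
  rw [← setIntegral_Ioi_exp_neg_mul_rlInt hν h2, ← integral_const_mul]
  refine setIntegral_congr_fun measurableSet_Ioi fun t ht => ?_
  simp only [rlInt_comp_mul_left ν f hu ht.le]
  ring

/-- The Sumudu transform of the Riemann–Liouville fractional integral of order ν of f
equals `u^ν` times the Sumudu transform of f, for f locally integrable on `[0,∞)` of at
most exponential growth, wherever both sides are defined. -/
theorem sumudu_rlInt (ν : ℝ) (hν : 0 < ν) (f : ℝ → ℝ)
    (hloc : LocallyIntegrableOn f (Set.Ici 0))
    (M a : ℝ) (hgrow : ∀ t ≥ (0 : ℝ), |f t| ≤ M * Real.exp (a * t))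
    (u : ℝ) (hu : 0 < u)
    (h1 : IntegrableOn (fun t => Real.exp (-t) * rlInt ν f (u * t)) (Set.Ioi 0))
    (h2 : IntegrableOn (fun t => Real.exp (-t) * f (u * t)) (Set.Ioi 0)) :
    (∫ t in Set.Ioi (0 : ℝ), Real.exp (-t) * rlInt ν f (u * t)) =
      u ^ ν * ∫ t in Set.Ioi (0 : ℝ), Real.exp (-t) * f (u * t) :=
  sumudu_rlInt_general ν hν f u hu h2
end

section
/- For ν > 0 and d > 0, the function N(t) = N₀ E_ν(-d^ν t^ν), where E_ν is the Mittag-Leffler function, solves the fractional kinetic equation N(t) - N₀ = -d^ν (₀D_t^{-ν} N)(t) for all t > 0. -/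
/-- The one-parameter Mittag-Leffler function `E_ν(z) = ∑ z^n / Γ(νn + 1)`. -/
noncomputable def mlE (ν z : ℝ) : ℝ := ∑' n : ℕ, z ^ n / Real.Gamma (ν * n + 1)

/-!
By the Beta integral, the Riemann–Liouville integral of order `ν` sends `s ^ (νn)` to
`Γ(νn + 1) / Γ(νn + ν + 1) * t ^ (νn + ν)`. Applied term by term to the series of
`E_ν(c s^ν)`, it therefore shifts the series by one index, so that `c` times the result is
`E_ν(c t^ν) - 1`. The interchange of sum and integral is justified because `Γ(νn + β)`
outgrows every geometric sequence, which follows from `⌊a⌋! ≤ Γ(a + 1)`.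
-/

open Real MeasureTheory
open scoped Nat

namespace Real

theorem factorial_floor_le_Gamma_add_one {a : ℝ} (ha : 1 ≤ a) :
    (⌊a⌋₊ ! : ℝ) ≤ Gamma (a + 1) := by
  have hfloor : (2 : ℝ) ≤ ⌊a⌋₊ + 1 := by
    have : 1 ≤ ⌊a⌋₊ := Nat.le_floor (by exact_mod_cast ha)
    exact_mod_cast Nat.succ_le_succ this
  have hle : (⌊a⌋₊ : ℝ) + 1 ≤ a + 1 := by linarith [Nat.floor_le (zero_le_one.trans ha)]
  rw [← Gamma_nat_eq_factorial]
  exact Gamma_strictMonoOn_Ici.monotoneOn hfloor (hfloor.trans hle) hle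

theorem rpow_le_mul_exp_mul_Gamma_add_one {c a : ℝ} (hc : 1 ≤ c) (ha : 1 ≤ a) :
    c ^ a ≤ c * exp c * Gamma (a + 1) :=
  calc c ^ a ≤ c ^ ((⌊a⌋₊ + 1 : ℕ) : ℝ) := by
        refine rpow_le_rpow_of_exponent_le hc ?_
        push_cast
        exact (Nat.lt_floor_add_one a).le
    _ = c * c ^ ⌊a⌋₊ := by rw [rpow_natCast, pow_succ']
    _ ≤ c * (exp c * ⌊a⌋₊ !) := by
        gcongr
        rw [← div_le_iff₀ (by positivity)]
        exact pow_div_factorial_le_exp _ (zero_le_one.trans hc) _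
    _ ≤ c * exp c * Gamma (a + 1) := by
        rw [← mul_assoc]
        gcongr
        exact factorial_floor_le_Gamma_add_one ha

theorem integral_rpow_mul_sub_rpow {p q a : ℝ} (hp : 0 < p) (hq : 0 < q) (ha : 0 < a) :
    ∫ x in (0 : ℝ)..a, x ^ (p - 1) * (a - x) ^ (q - 1) =
      a ^ (p + q - 1) * (Gamma p * Gamma q / Gamma (p + q)) := by
  have h := Complex.betaIntegral_scaled p q ha
  rw [Complex.betaIntegral_eq_Gamma_mul_div _ _ (by simpa) (by simpa)] at h
  apply Complex.ofReal_injective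
  rw [← intervalIntegral.integral_ofReal, Complex.ofReal_mul, Complex.ofReal_cpow ha.le,
    Complex.ofReal_div, Complex.ofReal_mul]
  simp only [← Complex.Gamma_ofReal]
  push_cast
  rw [← h]
  refine intervalIntegral.integral_congr fun x hx => ?_
  rw [Set.uIcc_of_le ha.le] at hx
  rw [Complex.ofReal_cpow hx.1, Complex.ofReal_cpow (sub_nonneg.2 hx.2)]
  push_cast
  rfl

end Real

theorem summable_pow_div_Gamma_mul_add {ν β : ℝ} (hν : 0 < ν) (hβ : 1 ≤ β) (z : ℝ) :
    Summable fun n : ℕ => z ^ n / Gamma (ν * n + β) := by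
  obtain ⟨c, hc, hzc⟩ : ∃ c : ℝ, 1 ≤ c ∧ |z| < c ^ ν := by
    refine ⟨max 1 ((|z| + 1) ^ ν⁻¹), le_max_left _ _, ?_⟩
    calc |z| < |z| + 1 := lt_add_one _
      _ = ((|z| + 1) ^ ν⁻¹) ^ ν := by
          rw [← rpow_mul (by positivity), inv_mul_cancel₀ hν.ne', rpow_one]
      _ ≤ (max 1 ((|z| + 1) ^ ν⁻¹)) ^ ν := by gcongr; exact le_max_right _ _
  have hcν : 0 < c ^ ν := by positivity
  have hq : |z| / c ^ ν < 1 := (div_lt_one hcν).2 hzc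
  refine ((summable_geometric_of_lt_one (by positivity) hq).mul_left (c * exp c))
    |>.of_norm_bounded_eventually_nat ?_
  obtain ⟨N, hN⟩ := exists_nat_ge ν⁻¹
  filter_upwards [Filter.eventually_ge_atTop N] with n hn
  have hνn : 1 ≤ ν * n := by
    rw [← inv_le_iff_one_le_mul₀' hν]
    exact hN.trans (by exact_mod_cast hn)
  have hΓ : 0 < Gamma (ν * n + β) := Gamma_pos_of_pos (by linarith)
  have hgrowth : (c ^ ν) ^ n ≤ c * exp c * Gamma (ν * n + β) :=
    calc (c ^ ν) ^ n = c ^ (ν * n) := by rw [← rpow_natCast, ← rpow_mul (by linarith)]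
      _ ≤ c ^ (ν * n + β - 1) := rpow_le_rpow_of_exponent_le hc (by linarith)
      _ ≤ c * exp c * Gamma (ν * n + β - 1 + 1) :=
          rpow_le_mul_exp_mul_Gamma_add_one hc (by linarith)
      _ = c * exp c * Gamma (ν * n + β) := by rw [sub_add_cancel]
  rw [norm_div, norm_pow, norm_of_nonneg hΓ.le, Real.norm_eq_abs, div_pow, mul_div_assoc',
    div_le_div_iff₀ hΓ (by positivity)]
  calc |z| ^ n * (c ^ ν) ^ n ≤ |z| ^ n * (c * exp c * Gamma (ν * n + β)) := by gcongr
    _ = _ := by ring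

theorem mlE_eq_one_add_mul_tsum {ν : ℝ} (hν : 0 < ν) (z : ℝ) :
    mlE ν z = 1 + z * ∑' n : ℕ, z ^ n / Gamma (ν * n + ν + 1) := by
  rw [mlE, (summable_pow_div_Gamma_mul_add hν le_rfl z).tsum_eq_zero_add, ← tsum_mul_left]
  simp only [pow_zero, Nat.cast_zero, mul_zero, zero_add, Gamma_one, div_one, Nat.cast_add_one]
  congr 1
  refine tsum_congr fun n => ?_
  rw [pow_succ', mul_add_one, mul_div_assoc]

theorem rlInt_const_mul (ν a : ℝ) (f : ℝ → ℝ) (t : ℝ) :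
    rlInt ν (fun s => a * f s) t = a * rlInt ν f t := by
  simp only [rlInt, mul_left_comm _ a, intervalIntegral.integral_const_mul]

theorem rlInt_rpow {ν μ t : ℝ} (hν : 0 < ν) (hμ : -1 < μ) (ht : 0 < t) :
    rlInt ν (fun s => s ^ μ) t = Gamma (μ + 1) / Gamma (μ + ν + 1) * t ^ (μ + ν) := by
  have hΓ : Gamma ν ≠ 0 := (Gamma_pos_of_pos hν).ne'
  have hβ := integral_rpow_mul_sub_rpow (p := μ + 1) (by linarith) hν ht
  simp only [add_sub_cancel_right, add_right_comm μ 1 ν] at hβ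
  rw [rlInt]
  simp_rw [mul_comm ((t - _) ^ (ν - 1))]
  rw [hβ]
  field_simp

theorem intervalIntegrable_sub_rpow_mul_rpow {ν μ : ℝ} (hν : 0 < ν) (hμ : 0 ≤ μ) (t : ℝ) :
    IntervalIntegrable (fun s => (t - s) ^ (ν - 1) * s ^ μ) volume 0 t := by
  have hkernel : IntervalIntegrable (fun s => (t - s) ^ (ν - 1)) volume 0 t := by
    simpa using ((intervalIntegral.intervalIntegrable_rpow' (a := 0) (b := t)
      (by linarith : -1 < ν - 1)).comp_sub_left t).symm
  exact hkernel.mul_continuousOn fun s _ =>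
    (continuousAt_rpow_const s μ (Or.inr hμ)).continuousWithinAt

theorem rlInt_tsum_mul_rpow {ν t : ℝ} (hν : 0 < ν) (ht : 0 ≤ t) {a μ : ℕ → ℝ}
    (hμ : ∀ n, 0 ≤ μ n) (hs : Summable fun n => |a n| * rlInt ν (fun s => s ^ μ n) t) :
    rlInt ν (fun s => ∑' n, a n * s ^ μ n) t = ∑' n, a n * rlInt ν (fun s => s ^ μ n) t := by
  set F : ℕ → ℝ → ℝ := fun n s => a n * ((t - s) ^ (ν - 1) * s ^ μ n)
  have hF : ∀ n, Integrable (F n) (volume.restrict (Set.Ioc 0 t)) := fun n =>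
    (intervalIntegrable_iff_integrableOn_Ioc_of_le ht).1
      ((intervalIntegrable_sub_rpow_mul_rpow hν (hμ n) t).const_mul (a n))
  have hF_norm : ∀ n, ∫ s in Set.Ioc 0 t, ‖F n s‖ =
      Gamma ν * (|a n| * rlInt ν (fun s => s ^ μ n) t) := by
    intro n
    have hΓ : Gamma ν ≠ 0 := (Gamma_pos_of_pos hν).ne'
    have hrl : Gamma ν * (|a n| * rlInt ν (fun s => s ^ μ n) t) =
        ∫ s in Set.Ioc 0 t, |a n| * ((t - s) ^ (ν - 1) * s ^ μ n) := by
      rw [rlInt, intervalIntegral.integral_of_le ht, integral_const_mul]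
      field_simp
    rw [hrl]
    refine setIntegral_congr_fun measurableSet_Ioc fun s hs => ?_
    have hnonneg : 0 ≤ (t - s) ^ (ν - 1) * s ^ μ n :=
      mul_nonneg (rpow_nonneg (sub_nonneg.2 hs.2) _) (rpow_nonneg hs.1.le _)
    rw [norm_mul, norm_of_nonneg hnonneg, Real.norm_eq_abs]
  have hswap := integral_tsum_of_summable_integral_norm hF
    (by simpa only [hF_norm] using hs.mul_left (Gamma ν))
  calc rlInt ν (fun s => ∑' n, a n * s ^ μ n) t
      = 1 / Gamma ν * ∫ s in Set.Ioc 0 t, ∑' n, F n s := by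
        simp only [rlInt, intervalIntegral.integral_of_le ht, F, ← tsum_mul_left, mul_left_comm]
    _ = 1 / Gamma ν * ∑' n, ∫ s in Set.Ioc 0 t, F n s := by rw [hswap]
    _ = ∑' n, a n * rlInt ν (fun s => s ^ μ n) t := by
        simp only [rlInt, intervalIntegral.integral_of_le ht, F, integral_const_mul,
          ← tsum_mul_left, mul_left_comm]

theorem rlInt_mlE_mul_rpow {ν t : ℝ} (hν : 0 < ν) (ht : 0 < t) (c : ℝ) :
    rlInt ν (fun s => mlE ν (c * s ^ ν)) t =
      t ^ ν * ∑' n : ℕ, (c * t ^ ν) ^ n / Gamma (ν * n + ν + 1) := by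
  have hseries : rlInt ν (fun s => mlE ν (c * s ^ ν)) t =
      rlInt ν (fun s => ∑' n : ℕ, c ^ n / Gamma (ν * n + 1) * s ^ (ν * n)) t := by
    rw [rlInt, rlInt]
    congr 1
    refine intervalIntegral.integral_congr fun s hs => ?_
    rw [Set.uIcc_of_le ht.le] at hs
    simp only [mlE, mul_pow, ← rpow_natCast (s ^ ν), ← rpow_mul hs.1, div_mul_eq_mul_div,
      mul_comm (c ^ _)]
  have hterm : ∀ (b : ℝ) (n : ℕ), b ^ n / Gamma (ν * n + 1) * rlInt ν (fun s => s ^ (ν * n)) t =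
      t ^ ν * ((b * t ^ ν) ^ n / Gamma (ν * n + ν + 1)) := by
    intro b n
    have hΓ : Gamma (ν * n + 1) ≠ 0 := (Gamma_pos_of_pos (by positivity)).ne'
    rw [rlInt_rpow hν (by linarith [show 0 ≤ ν * n by positivity]) ht, rpow_add ht, mul_pow,
      ← rpow_natCast (t ^ ν), ← rpow_mul ht.le]
    field_simp
  have hsum : Summable fun n : ℕ =>
      |c ^ n / Gamma (ν * n + 1)| * rlInt ν (fun s => s ^ (ν * n)) t := by
    refine ((summable_pow_div_Gamma_mul_add (β := ν + 1) hν (by linarith)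
      (|c| * t ^ ν)).mul_left (t ^ ν)).congr fun n => ?_
    rw [← add_assoc, ← hterm, abs_div, abs_pow, abs_of_pos (Gamma_pos_of_pos (by positivity))]
  rw [hseries, rlInt_tsum_mul_rpow hν ht.le (fun n => by positivity) hsum, ← tsum_mul_left]
  exact tsum_congr (hterm c)

theorem mittagLeffler_solves_kinetic_general (ν d N₀ : ℝ) (hν : 0 < ν)
    (t : ℝ) (ht : 0 < t) :
    N₀ * mlE ν (-(d ^ ν) * t ^ ν) - N₀ =
      -(d ^ ν) * rlInt ν (fun s => N₀ * mlE ν (-(d ^ ν) * s ^ ν)) t := by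
  rw [mlE_eq_one_add_mul_tsum hν, rlInt_const_mul, rlInt_mlE_mul_rpow hν ht]
  ring

/-- For `ν > 0`, `d > 0`, `N(t) = N₀ E_ν(-d^ν t^ν)` solves the fractional kinetic
equation `N(t) - N₀ = -d^ν (₀D_t^{-ν} N)(t)` for `t > 0`. -/
theorem mittagLeffler_solves_kinetic (ν d N₀ : ℝ) (hν : 0 < ν) (hd : 0 < d)
    (t : ℝ) (ht : 0 < t) :
    N₀ * mlE ν (-(d ^ ν) * t ^ ν) - N₀ =
      -(d ^ ν) * rlInt ν (fun s => N₀ * mlE ν (-(d ^ ν) * s ^ ν)) t :=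
  mittagLeffler_solves_kinetic_general ν d N₀ hν t ht
end
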